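/- Let n ≥ 3 and let λ be a partition of n with a_k parts equal to k. The average number of cyclic descents over the conjugacy class C_λ equals n/2 + (a_2 − a_1(a_1−1)/2)/(n−1) + (a_1 − 1)/(n−1). -/

import Mathlib

/-!
Conjugating by the rotation `x ↦ i + x` of `ℤ/n` carries positions `0, 1` to `i, i + 1`, so on a
conjugation-invariant set of permutations the cyclic descents add up to the sum of
`(ω 1 - ω 0) mod n = ω 1 - ω 0 + n [ω 1 < ω 0]`. Conjugating by the transposition `(0 1)` pairs
the permutations with `ω 1 < ω 0` with those with `ω 0 < ω 1`, except for those fixing or swapping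
`0` and `1`, and it turns `ω 1` into `(0 1) (ω 0)`. This leaves the numbers of class members with
`ω 0 = 0`, with `ω 0 = 1`, fixing `0` and `1`, or swapping them; since `S_n` acts transitively on
points and on pairs of distinct points, double counting expresses them through `a₁` and `a₂`.
-/

/-- The conjugacy class of `S_n` consisting of permutations of cycle type `lam`
(Mathlib's `cycleType` omits fixed points, so we compare with the parts of `lam` not equal
to `1`). -/
noncomputable def conjClass (n : ℕ) (lam : n.Partition) : Finset (Equiv.Perm (Fin n)) :=
  Finset.univ.filter fun ω => ω.cycleType = Multiset.filter (fun i => i ≠ 1) lam.parts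

/-- The successor of `i` in `Fin n`, computed modulo `n`.  This implements the cyclic
convention `ω(n+1) := ω(1)` for cyclic descents. -/
def succMod {n : ℕ} (i : Fin n) : Fin n := ⟨((i : ℕ) + 1) % n, Nat.mod_lt _ i.pos⟩

/-- The number of cyclic descents of a permutation: positions `i ∈ {1,…,n}` with
`ω(i) > ω(i+1)`, where `ω(n+1) := ω(1)`. -/
def cdes {n : ℕ} (ω : Equiv.Perm (Fin n)) : ℕ :=
  (Finset.univ.filter fun i : Fin n => ω (succMod i) < ω i).card

open Finset Equiv Equiv.Perm

theorem Finset.card_offDiag_eq_descFactorial {α : Type*} (s : Finset α) :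
    #s.offDiag = (#s).descFactorial 2 := by
  rw [offDiag_card, Nat.descFactorial, Nat.descFactorial_one, Nat.sub_one_mul]

namespace Equiv.Perm

variable {α : Type*}

theorem exists_apply_eq_and_apply_eq {a b x y : α} (hab : a ≠ b) (hxy : x ≠ y) :
    ∃ σ : Perm α, σ a = x ∧ σ b = y := by
  have hinj : ∀ {u v : α}, u ≠ v → Function.Injective ![u, v] := by
    intro u v huv i j
    fin_cases i <;> fin_cases j <;> simp [huv, huv.symm]
  obtain ⟨σ, hσ⟩ := exists_extending_pair _ _ (hinj hab) (hinj hxy)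
  exact ⟨σ, hσ 0, hσ 1⟩

variable {C : Finset (Perm α)}

theorem sum_conj_eq_sum (hC : ∀ σ, ∀ ω ∈ C, σ * ω * σ⁻¹ ∈ C) {M : Type*} [AddCommMonoid M]
    (f : Perm α → M) (σ : Perm α) : ∑ ω ∈ C, f (σ * ω * σ⁻¹) = ∑ ω ∈ C, f ω :=
  sum_nbij' (fun ω => σ * ω * σ⁻¹) (fun ω => σ⁻¹ * ω * σ) (hC σ)
    (fun ω hω => by simpa using hC σ⁻¹ ω hω) (fun ω _ => by group) (fun ω _ => by group)
    (fun _ _ => rfl)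

theorem card_filter_conj_eq (hC : ∀ σ, ∀ ω ∈ C, σ * ω * σ⁻¹ ∈ C) {P Q : Perm α → Prop}
    [DecidablePred P] [DecidablePred Q] (σ : Perm α) (hPQ : ∀ ω, Q (σ * ω * σ⁻¹) ↔ P ω) :
    #{ω ∈ C | Q ω} = #{ω ∈ C | P ω} := by
  simp only [card_filter]
  rw [← sum_conj_eq_sum hC _ σ]
  simp only [hPQ]

variable [Fintype α]

theorem descFactorial_two_mul_card_filter_eq_sum_offDiag (hC : ∀ σ, ∀ ω ∈ C, σ * ω * σ⁻¹ ∈ C)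
    (Q : Perm α → α → α → Prop) [∀ ω x y, Decidable (Q ω x y)]
    (hQ : ∀ σ ω x y, Q (σ * ω * σ⁻¹) (σ x) (σ y) ↔ Q ω x y)
    {a b : α} (hab : a ≠ b) :
    (Fintype.card α).descFactorial 2 * #{ω ∈ C | Q ω a b}
      = ∑ ω ∈ C, #{p ∈ (univ : Finset α).offDiag | Q ω p.1 p.2} := by
  have hconst : ∀ p ∈ (univ : Finset α).offDiag,
      #{ω ∈ C | Q ω p.1 p.2} = #{ω ∈ C | Q ω a b} := by
    intro p hp
    obtain ⟨σ, hσa, hσb⟩ := exists_apply_eq_and_apply_eq hab (mem_offDiag.mp hp).2.2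
    exact card_filter_conj_eq hC σ fun ω => by simpa [hσa, hσb] using hQ σ ω a b
  simp only [card_filter] at hconst ⊢
  rw [sum_comm, sum_congr rfl hconst, sum_const, card_offDiag_eq_descFactorial, card_univ,
    smul_eq_mul]

variable [DecidableEq α]

theorem card_mul_card_filter_eq_sum (hC : ∀ σ, ∀ ω ∈ C, σ * ω * σ⁻¹ ∈ C)
    (P : Perm α → α → Prop) [∀ ω x, Decidable (P ω x)]
    (hP : ∀ σ ω x, P (σ * ω * σ⁻¹) (σ x) ↔ P ω x) (a : α) :
    Fintype.card α * #{ω ∈ C | P ω a} = ∑ ω ∈ C, #{x | P ω x} := by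
  have hconst : ∀ x, #{ω ∈ C | P ω x} = #{ω ∈ C | P ω a} := fun x =>
    card_filter_conj_eq hC (swap a x) fun ω => by simpa using hP (swap a x) ω a
  simp only [card_filter] at hconst ⊢
  rw [sum_comm, sum_congr rfl fun x _ => hconst x, sum_const, card_univ, smul_eq_mul]

theorem card_filter_apply_eq_self_add_sum_cycleType (σ : Perm α) :
    #{x | σ x = x} + σ.cycleType.sum = Fintype.card α := by
  rw [sum_cycleType, support, card_filter_add_card_filter_not, card_univ]

theorem card_support_cycleOf_eq_two_iff {σ : Perm α} {x : α} :
    #(σ.cycleOf x).support = 2 ↔ σ x ≠ x ∧ σ (σ x) = x := by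
  by_cases hx : σ x = x
  · simp [hx, (cycleOf_eq_one_iff σ).mpr hx]
  -- `σ ^ 2` fixes `x` iff the length of the cycle through `x` divides `2`
  have h := σ.zpow_eq_zpow_on_iff (m := 2) (n := 0) hx
  simp only [zpow_ofNat, pow_zero, one_apply, sq, mul_apply] at h
  rw [h]
  have h2 := two_le_card_support_cycleOf_iff.mpr hx
  constructor
  · intro h'
    simp [h', hx]
  · rintro ⟨-, h'⟩
    have : (#(σ.cycleOf x).support : ℤ) ∣ 2 := Int.dvd_of_emod_eq_zero (by simpa using h')
    have := Int.le_of_dvd (by norm_num) this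
    omega

theorem card_filter_card_support_cycleOf_eq (σ : Perm α) {k : ℕ} (hk : k ≠ 0) :
    #{x | #(σ.cycleOf x).support = k} = k * σ.cycleType.count k := by
  have hunion : ({x | #(σ.cycleOf x).support = k} : Finset α)
      = {c ∈ σ.cycleFactorsFinset | #c.support = k}.biUnion support := by
    ext x
    simp only [mem_filter, mem_univ, true_and, mem_biUnion]
    constructor
    · intro hx
      have hsupp : x ∈ σ.support :=
        mem_support.mpr fun h => hk (by simp [← hx, (cycleOf_eq_one_iff σ).mpr h])
      exact ⟨σ.cycleOf x, ⟨cycleOf_mem_cycleFactorsFinset_iff.mpr hsupp, hx⟩,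
        mem_support_cycleOf_iff.mpr ⟨SameCycle.refl _ _, hsupp⟩⟩
    · rintro ⟨c, ⟨hc, hck⟩, hxc⟩
      rwa [← cycle_is_cycleOf hxc hc]
  rw [hunion, card_biUnion, sum_congr rfl fun c hc => (mem_filter.mp hc).2, sum_const,
    smul_eq_mul, mul_comm, cycleType_def, Multiset.count_map, card_def, filter_val]
  · simp_rw [Function.comp_apply, eq_comm]
  · intro c hc d hd hcd
    exact (cycleFactorsFinset_pairwise_disjoint σ (mem_filter.mp hc).1 (mem_filter.mp hd).1
      hcd).disjoint_support

theorem card_filter_apply_ne_self_and_apply_apply_eq_self (σ : Perm α) :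
    #{x | σ x ≠ x ∧ σ (σ x) = x} = 2 * σ.cycleType.count 2 := by
  simp_rw [← card_support_cycleOf_eq_two_iff]
  exact σ.card_filter_card_support_cycleOf_eq two_ne_zero

theorem card_filter_offDiag_apply_eq_and (σ : Perm α) (R : α → Prop) [DecidablePred R] :
    #{p ∈ (univ : Finset α).offDiag | σ p.1 = p.2 ∧ R p.1} = #{x | σ x ≠ x ∧ R x} := by
  rw [← card_image_of_injective _
    (fun x y h => (Prod.ext_iff.mp h).1 : (fun x => (x, σ x)).Injective)]
  congr 1
  ext ⟨x, y⟩
  simp only [mem_filter, mem_offDiag, mem_univ, true_and, mem_image, Prod.mk.injEq]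
  constructor
  · rintro ⟨hxy, rfl, hR⟩
    exact ⟨x, ⟨Ne.symm hxy, hR⟩, rfl, rfl⟩
  · rintro ⟨x, ⟨hx, hR⟩, rfl, rfl⟩
    exact ⟨Ne.symm hx, rfl, hR⟩

end Equiv.Perm

theorem Equiv.swap_lt_swap_iff_of_covBy {β : Type*} [LinearOrder β] {a b u v : β} (hab : a ⋖ b)
    (h₁ : ¬(u = a ∧ v = b)) (h₂ : ¬(u = b ∧ v = a)) : swap a b u < swap a b v ↔ u < v := by
  have hlt : ∀ {c}, c ≠ a → c ≠ b → (c < a ↔ c < b) := fun hca _ =>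
    ⟨fun h => h.trans hab.lt, fun h => lt_of_le_of_ne (hab.le_of_lt h) hca⟩
  have hgt : ∀ {c}, c ≠ a → c ≠ b → (a < c ↔ b < c) := fun _ hcb =>
    ⟨fun h => lt_of_le_of_ne (hab.ge_of_gt h) (Ne.symm hcb), fun h => hab.lt.trans h⟩
  simp only [swap_apply_def]
  split_ifs <;> subst_vars <;> simp_all

theorem card_filter_lt_add_card_filter_eq_of_covBy {α : Type*} [LinearOrder α]
    {C : Finset (Perm α)} (hC : ∀ σ, ∀ ω ∈ C, σ * ω * σ⁻¹ ∈ C) {a b : α} (hab : a ⋖ b) :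
    #{ω ∈ C | ω b < ω a} + #{ω ∈ C | ω a = a ∧ ω b = b}
      = #{ω ∈ C | ω a < ω b} + #{ω ∈ C | ω a = b ∧ ω b = a} := by
  -- conjugating by `swap a b` exchanges the two sides, up to the permutations fixing or
  -- swapping `a` and `b`
  rw [card_filter_conj_eq hC (P := fun ω => swap a b (ω a) < swap a b (ω b)) (swap a b)
    fun ω => by simp [mul_apply, swap_inv]]
  simp only [card_filter, ← sum_add_distrib]
  refine sum_congr rfl fun ω _ => ?_
  by_cases h₁ : ω a = a ∧ ω b = b
  · simp [h₁, hab.lt, hab.lt.ne, hab.lt.ne', hab.le]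
  by_cases h₂ : ω a = b ∧ ω b = a
  · simp [h₂, hab.lt, hab.lt.ne, hab.lt.ne', hab.lt.not_gt]
  simp only [swap_lt_swap_iff_of_covBy hab h₁ h₂, if_neg h₁, if_neg h₂]

theorem Fin.intCast_val_sub {n : ℕ} (a b : Fin n) :
    (((a - b : Fin n) : ℕ) : ℤ) = a - b + if a < b then (n : ℤ) else 0 := by
  split_ifs with h
  · rw [Fin.coe_sub_iff_lt.mpr h]
    have := b.isLt
    push_cast [Nat.sub_add_comm, show b.val ≤ n + a by omega]
    ring
  · rw [Fin.sub_val_of_le (not_lt.mp h), Nat.cast_sub (Fin.le_def.mp (not_lt.mp h))]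
    ring

theorem Fin.card_filter_add_lt_add {n : ℕ} [NeZero n] (x y : Fin n) :
    #{i | i + x < i + y} = ((x - y : Fin n) : ℕ) := by
  -- `i + x` and `i + y` both run over all of `Fin n`, so the differences below sum to zero
  have hterm : ∀ i : Fin n, (((i + x : Fin n) : ℕ) : ℤ) - ((i + y : Fin n) : ℕ)
      = ((x - y : Fin n) : ℕ) - n * if i + x < i + y then 1 else 0 := by
    intro i
    rw [← add_sub_add_left_eq_sub x y i, Fin.intCast_val_sub]
    split_ifs <;> ring
  have hshift : ∀ z : Fin n,
      ∑ i : Fin n, (((i + z : Fin n) : ℕ) : ℤ) = ∑ i : Fin n, ((i : ℕ) : ℤ) :=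
    fun z => Fintype.sum_equiv (Equiv.addRight z) _ _ fun _ => rfl
  have hsum := sum_congr rfl fun i (_ : i ∈ univ) => hterm i
  rw [sum_sub_distrib, sum_sub_distrib, hshift, hshift, sub_self, ← mul_sum, sum_boole, sum_const,
    nsmul_eq_mul] at hsum
  have hn : (n : ℤ) ≠ 0 := by exact_mod_cast NeZero.ne n
  have h : (n : ℤ) * #{i | i + x < i + y} = n * ((x - y : Fin n) : ℕ) := by
    linear_combination hsum
  exact_mod_cast mul_left_cancel₀ hn h

theorem succMod_eq_add_one {n : ℕ} [NeZero n] (i : Fin n) : succMod i = i + 1 :=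
  Fin.ext (by simp [succMod, Fin.val_add])

theorem sum_cdes_eq_sum_val_sub {n : ℕ} [NeZero n] {C : Finset (Perm (Fin n))}
    (hC : ∀ σ, ∀ ω ∈ C, σ * ω * σ⁻¹ ∈ C) :
    ∑ ω ∈ C, cdes ω = ∑ ω ∈ C, ((ω 1 - ω 0 : Fin n) : ℕ) := by
  have hrot : ∀ i : Fin n, ∑ ω ∈ C, (if ω (i + 1) < ω i then 1 else 0)
      = ∑ ω ∈ C, (if i + ω 1 < i + ω 0 then 1 else 0) := by
    intro i
    rw [← sum_conj_eq_sum hC _ (Equiv.addLeft i)]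
    simp [mul_apply]
  calc ∑ ω ∈ C, cdes ω = ∑ i, ∑ ω ∈ C, if ω (i + 1) < ω i then 1 else 0 := by
        simp only [cdes, card_filter, succMod_eq_add_one]
        exact sum_comm
    _ = ∑ i, ∑ ω ∈ C, if i + ω 1 < i + ω 0 then 1 else 0 := sum_congr rfl fun i _ => hrot i
    _ = ∑ ω ∈ C, #{i | i + ω 1 < i + ω 0} := by
        simp only [card_filter]
        exact sum_comm
    _ = ∑ ω ∈ C, ((ω 1 - ω 0 : Fin n) : ℕ) :=
        sum_congr rfl fun ω _ => Fin.card_filter_add_lt_add _ _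

theorem sum_val_apply_one_sub_val_apply_zero {n : ℕ} {C : Finset (Perm (Fin (n + 2)))}
    (hC : ∀ σ, ∀ ω ∈ C, σ * ω * σ⁻¹ ∈ C) :
    ∑ ω ∈ C, (((ω 1 : ℕ) : ℤ) - (ω 0 : ℕ)) = #{ω ∈ C | ω 0 = 0} - #{ω ∈ C | ω 0 = 1} := by
  rw [sum_sub_distrib, ← sum_conj_eq_sum hC (fun ω => ((ω 1 : ℕ) : ℤ)) (swap 0 1)]
  simp only [card_filter, mul_apply, swap_inv, swap_apply_right, Nat.cast_sum, ← sum_sub_distrib]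
  refine sum_congr rfl fun ω _ => ?_
  rcases eq_or_ne (ω 0) 0 with h0 | h0
  · simp [h0]
  rcases eq_or_ne (ω 0) 1 with h1 | h1
  · simp [h1]
  simp [swap_apply_of_ne_of_ne h0 h1, h0, h1]

theorem two_mul_sum_cdes {n : ℕ} {C : Finset (Perm (Fin (n + 2)))}
    (hC : ∀ σ, ∀ ω ∈ C, σ * ω * σ⁻¹ ∈ C) :
    2 * (∑ ω ∈ C, cdes ω : ℤ)
      = (n + 2) * (#C + #{ω ∈ C | ω 0 = 1 ∧ ω 1 = 0} - #{ω ∈ C | ω 0 = 0 ∧ ω 1 = 1})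
        + 2 * (#{ω ∈ C | ω 0 = 0} - #{ω ∈ C | ω 0 = 1}) := by
  have hdes : (∑ ω ∈ C, cdes ω : ℤ)
      = ∑ ω ∈ C, (((ω 1 : ℕ) : ℤ) - (ω 0 : ℕ)) + (n + 2) * #{ω ∈ C | ω 1 < ω 0} := by
    rw [← Nat.cast_sum, sum_cdes_eq_sum_val_sub hC, Nat.cast_sum]
    simp only [Fin.intCast_val_sub, sum_add_distrib, ← sum_filter, sum_const, nsmul_eq_mul]
    push_cast
    ring
  have htot : #{ω ∈ C | ω 1 < ω 0} + #{ω ∈ C | ω 0 < ω 1} = #C := by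
    have hcompl : {ω ∈ C | ¬ω 1 < ω 0} = {ω ∈ C | ω 0 < ω 1} := filter_congr fun ω _ => by
      rw [not_lt, le_iff_lt_or_eq, or_iff_left (ω.injective.ne (by simp))]
    rw [← hcompl, card_filter_add_card_filter_not]
  have hord := card_filter_lt_add_card_filter_eq_of_covBy hC (a := 0) (b := 1)
    (by simp [Fin.covBy_iff])
  rw [hdes, sum_val_apply_one_sub_val_apply_zero hC]
  zify at htot hord
  linear_combination (n + 2 : ℤ) * (htot + hord)

section ConjClass

variable {n : ℕ} {lam : n.Partition}

theorem mem_conjClass {ω : Perm (Fin n)} :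
    ω ∈ conjClass n lam ↔ ω.cycleType = lam.parts.filter (· ≠ 1) := by
  simp [conjClass]

theorem conj_mem_conjClass (lam : n.Partition) :
    ∀ σ, ∀ ω ∈ conjClass n lam, σ * ω * σ⁻¹ ∈ conjClass n lam := by
  intro σ ω hω
  rw [mem_conjClass] at hω ⊢
  rw [cycleType_conj, hω]

theorem Nat.Partition.count_one_add_sum_filter_ne_one (lam : n.Partition) :
    lam.parts.count 1 + (lam.parts.filter (· ≠ 1)).sum = n := by
  conv_rhs => rw [← lam.parts_sum, ← Multiset.filter_add_not (· = 1) lam.parts]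
  rw [Multiset.filter_eq', Multiset.sum_add, Multiset.sum_replicate, smul_eq_mul, mul_one]

theorem sum_cycleType_add_count_one_of_mem_conjClass {ω : Perm (Fin n)}
    (hω : ω ∈ conjClass n lam) : ω.cycleType.sum + lam.parts.count 1 = n := by
  rw [mem_conjClass.mp hω, add_comm, lam.count_one_add_sum_filter_ne_one]

theorem conjClass_nonempty (lam : n.Partition) : (conjClass n lam).Nonempty := by
  obtain ⟨ω, hω⟩ : ∃ ω : Perm (Fin n), ω.cycleType = lam.parts.filter (· ≠ 1) := by
    have := lam.count_one_add_sum_filter_ne_one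
    rw [exists_with_cycleType_iff, Fintype.card_fin]
    refine ⟨by omega, fun a ha => ?_⟩
    rw [Multiset.mem_filter] at ha
    have := lam.parts_pos ha.1
    omega
  exact ⟨ω, mem_conjClass.mpr hω⟩

theorem card_mul_card_filter_apply_eq_self (a : Fin n) :
    n * #{ω ∈ conjClass n lam | ω a = a} = lam.parts.count 1 * #(conjClass n lam) := by
  have h := card_mul_card_filter_eq_sum (conj_mem_conjClass lam) (fun ω x => ω x = x)
    (by simp) a
  rw [Fintype.card_fin] at h
  rw [h, sum_congr rfl fun ω hω => ?_, sum_const, smul_eq_mul, mul_comm]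
  have := card_filter_apply_eq_self_add_sum_cycleType ω
  have := sum_cycleType_add_count_one_of_mem_conjClass hω
  simp only [Fintype.card_fin] at *
  omega

theorem descFactorial_two_mul_card_filter_apply_eq {a b : Fin n} (hab : a ≠ b) :
    n.descFactorial 2 * #{ω ∈ conjClass n lam | ω a = b}
        + lam.parts.count 1 * #(conjClass n lam)
      = n * #(conjClass n lam) := by
  have h := descFactorial_two_mul_card_filter_eq_sum_offDiag (conj_mem_conjClass lam)
    (fun ω x y => ω x = y) (by simp) hab
  rw [Fintype.card_fin] at h
  have hmoved : ∀ ω ∈ conjClass n lam,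
      #{p ∈ (univ : Finset (Fin n)).offDiag | ω p.1 = p.2} + lam.parts.count 1 = n := by
    intro ω hω
    have hpairs := card_filter_offDiag_apply_eq_and ω fun _ => True
    simp only [and_true] at hpairs
    have hsum := sum_cycleType_add_count_one_of_mem_conjClass hω
    rw [sum_cycleType, support] at hsum
    rwa [hpairs]
  rw [h, mul_comm _ #(conjClass n lam), mul_comm n, ← sum_const_nat hmoved, sum_add_distrib,
    sum_const, smul_eq_mul]

theorem descFactorial_two_mul_card_filter_apply_eq_self_and {a b : Fin n} (hab : a ≠ b) :
    n.descFactorial 2 * #{ω ∈ conjClass n lam | ω a = a ∧ ω b = b}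
      = (lam.parts.count 1).descFactorial 2 * #(conjClass n lam) := by
  have h := descFactorial_two_mul_card_filter_eq_sum_offDiag (conj_mem_conjClass lam)
    (fun ω x y => ω x = x ∧ ω y = y) (by simp) hab
  rw [Fintype.card_fin] at h
  rw [h, mul_comm, sum_const_nat fun ω hω => ?_]
  have hfix : #{x | ω x = x} = lam.parts.count 1 := by
    have := card_filter_apply_eq_self_add_sum_cycleType ω
    have := sum_cycleType_add_count_one_of_mem_conjClass hω
    simp only [Fintype.card_fin] at *
    omega
  have hpairs : ({p ∈ (univ : Finset (Fin n)).offDiag | ω p.1 = p.1 ∧ ω p.2 = p.2} : Finset _)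
      = ({x | ω x = x} : Finset (Fin n)).offDiag := by
    ext p
    simp only [mem_filter, mem_offDiag, mem_univ, true_and]
    tauto
  rw [hpairs, card_offDiag_eq_descFactorial, hfix]

theorem descFactorial_two_mul_card_filter_apply_eq_and {a b : Fin n} (hab : a ≠ b) :
    n.descFactorial 2 * #{ω ∈ conjClass n lam | ω a = b ∧ ω b = a}
      = 2 * lam.parts.count 2 * #(conjClass n lam) := by
  have h := descFactorial_two_mul_card_filter_eq_sum_offDiag (conj_mem_conjClass lam)
    (fun ω x y => ω x = y ∧ ω y = x) (by simp) hab
  rw [Fintype.card_fin] at h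
  rw [h, mul_comm, sum_const_nat fun ω hω => ?_]
  have hcount : ω.cycleType.count 2 = lam.parts.count 2 := by
    rw [mem_conjClass.mp hω, Multiset.count_filter_of_pos (by norm_num)]
  rw [← hcount, ← card_filter_apply_ne_self_and_apply_apply_eq_self,
    ← card_filter_offDiag_apply_eq_and]
  exact congrArg card (filter_congr fun p _ => and_congr_right fun h1 => by rw [h1])

end ConjClass

theorem stmt9 (n : ℕ) (hn : 3 ≤ n) (lam : n.Partition) (a1 a2 : ℕ)
    (ha1 : a1 = Multiset.count 1 lam.parts) (ha2 : a2 = Multiset.count 2 lam.parts) :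
    (∑ ω ∈ conjClass n lam, (cdes ω : ℝ)) / ((conjClass n lam).card : ℝ)
      = (n : ℝ) / 2 + ((a2 : ℝ) - (a1 : ℝ) * ((a1 : ℝ) - 1) / 2) / ((n : ℝ) - 1)
        + ((a1 : ℝ) - 1) / ((n : ℝ) - 1) := by
  obtain ⟨m, rfl⟩ : ∃ m, n = m + 2 := ⟨n - 2, by omega⟩
  subst ha1 ha2
  have hsum := two_mul_sum_cdes (conj_mem_conjClass lam)
  have hF0 := card_mul_card_filter_apply_eq_self (lam := lam) 0
  have hF1 := descFactorial_two_mul_card_filter_apply_eq (lam := lam) zero_ne_one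
  have hp1 := descFactorial_two_mul_card_filter_apply_eq_self_and (lam := lam) zero_ne_one
  have hp2 := descFactorial_two_mul_card_filter_apply_eq_and (lam := lam) zero_ne_one
  have hK : (#(conjClass (m + 2) lam) : ℝ) ≠ 0 := by
    exact_mod_cast (conjClass_nonempty lam).card_pos.ne'
  have hN : (m : ℝ) + 2 ≠ 0 := by positivity
  have hN1 : (m : ℝ) + 2 - 1 ≠ 0 := by linarith
  apply_fun (Int.cast : ℤ → ℝ) at hsum
  apply_fun (Nat.cast : ℕ → ℝ) at hF0 hF1 hp1 hp2
  push_cast [Nat.cast_descFactorial_two] at hsum hF0 hF1 hp1 hp2 ⊢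
  rw [div_eq_iff hK]
  field_simp
  refine mul_left_cancel₀ hN ?_
  linear_combination ((m : ℝ) + 2) * ((m : ℝ) + 1) * hsum + ((m : ℝ) + 2) * (hp2 - hp1)
    + 2 * ((m : ℝ) + 1) * hF0 - 2 * hF1
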